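/- arXiv:1704.03679 — 3 statements merged into one kernel-verified Lean document; each statement's English description precedes it below -/
import Mathlib

section
/- Let J be a bounded Jacobi operator on ℓ²(ℤ) with entries b_j (diagonal) and a_j > 0 (off-diagonal), and let (μ⁻, μ⁺) be a gap in its spectrum. Then μ⁺ − μ⁻ ≤ 2(ω_b + 2ω_a), where ω_c := sup_{i,j} (c_i − c_j) is the variation of a bounded real sequence c. -/
/-!
Compare `J` with the free Jacobi operator with constant coefficients `α = a 0 > 0` and `c = b 0`,
whose spectrum is the band `[c - 2α, c + 2α]`; the coefficients of `J` deviate from these by at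
most `ρa = ω_a` and `ρb = ω_b`. Let `t` be the midpoint of the gap. If `t` lies outside the band,
the bound `‖J - c‖ ≤ 2(α + ρa) + ρb` puts the gap endpoint beyond `t` within `2ρa + ρb` of `t`.
If `t = c + 2α cos θ` lies in the band, truncations of the plane wave `e^{inθ}` are approximate
eigenvectors of `J` with defect tending to at most `2ρa + ρb`; as `J` is self-adjoint,
`‖(t - J)⁻¹‖ = dist(t, σ(J))⁻¹`, so `σ(J)` comes that close to `t`. Either way the half-length of
the gap is at most `2ρa + ρb`.
-/

open Set

local notation "ℓ²" => lp (fun _ : ℤ => ℂ) 2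

noncomputable def planeWave (θ : ℝ) (n : ℤ) : ℂ := Complex.exp ((n * θ : ℝ) * Complex.I)

theorem norm_planeWave (θ : ℝ) (n : ℤ) : ‖planeWave θ n‖ = 1 :=
  Complex.norm_exp_ofReal_mul_I _

theorem planeWave_sub_one_add_planeWave_add_one (θ : ℝ) (n : ℤ) :
    planeWave θ (n - 1) + planeWave θ (n + 1) = 2 * Complex.cos θ * planeWave θ n := by
  simp only [planeWave, Complex.two_cos, add_mul, ← Complex.exp_add]
  push_cast
  ring_nf

theorem sq_mul_add_mul_add_mul_le {A B u v w : ℝ} (hA : 0 ≤ A) (hB : 0 ≤ B) :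
    (A * u + B * v + A * w) ^ 2 ≤ (2 * A + B) * (A * u ^ 2 + B * v ^ 2 + A * w ^ 2) := by
  nlinarith [mul_nonneg (mul_nonneg hA hB) (sq_nonneg (u - v)),
    mul_nonneg (mul_nonneg hA hA) (sq_nonneg (u - w)),
    mul_nonneg (mul_nonneg hA hB) (sq_nonneg (v - w))]

theorem sum_Icc_le_of_le_of_le {g : ℤ → ℝ} (N : ℕ) {R K : ℝ} (hR : 0 ≤ R) (hK : 0 ≤ K)
    (hbulk : ∀ n ∈ Finset.Icc (-N + 1 : ℤ) (N - 1), g n ≤ R) (hedge : ∀ n, g n ≤ K) :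
    ∑ n ∈ Finset.Icc (-N - 1 : ℤ) (N + 1), g n ≤ (2 * N + 1) * R + 4 * K := by
  set bulk := Finset.Icc (-N + 1 : ℤ) (N - 1)
  set supp := Finset.Icc (-N - 1 : ℤ) (N + 1)
  have hsub : bulk ⊆ supp := Finset.Icc_subset_Icc (by omega) (by omega)
  have hbulk_card : (bulk.card : ℝ) ≤ 2 * N + 1 := by
    rw [Int.card_Icc]
    exact_mod_cast (by omega : ((N - 1 : ℤ) + 1 - (-N + 1)).toNat ≤ 2 * N + 1)
  have hedge_card : ((supp \ bulk).card : ℝ) ≤ 4 := by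
    rw [Finset.card_sdiff_of_subset hsub, Int.card_Icc, Int.card_Icc]
    exact_mod_cast
      (by omega : ((N + 1 : ℤ) + 1 - (-N - 1)).toNat - ((N - 1 : ℤ) + 1 - (-N + 1)).toNat ≤ 4)
  rw [← Finset.sum_sdiff hsub, add_comm]
  gcongr
  · exact (Finset.sum_le_card_nsmul _ _ _ hbulk).trans (by rw [nsmul_eq_mul]; gcongr)
  · exact (Finset.sum_le_card_nsmul _ _ _ fun n _ => hedge n).trans
      (by rw [nsmul_eq_mul]; gcongr)

namespace lp

variable {α : Type*} {E : α → Type*} [∀ i, NormedAddCommGroup (E i)]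

theorem norm_sq_eq_tsum (x : lp E 2) : ‖x‖ ^ 2 = ∑' i, ‖x i‖ ^ 2 := by
  simpa only [ENNReal.toReal_ofNat, Real.rpow_two] using lp.norm_rpow_eq_tsum (by norm_num) x

theorem summable_norm_sq (x : lp E 2) : Summable fun i => ‖x i‖ ^ 2 := by
  simpa only [ENNReal.toReal_ofNat, Real.rpow_two] using
    (memℓp_gen_iff (p := 2) (by norm_num)).1 (lp.memℓp x)

theorem norm_sq_eq_sum_of_support_subset (x : lp E 2) {s : Finset α}
    (hs : ∀ i ∉ s, x i = 0) : ‖x‖ ^ 2 = ∑ i ∈ s, ‖x i‖ ^ 2 := by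
  rw [norm_sq_eq_tsum, tsum_eq_sum fun i hi => by simp [hs i hi]]

end lp

theorem memℓp_ite_mem {α : Type*} {E : α → Type*} [∀ i, NormedAddCommGroup (E i)]
    [DecidableEq α] (s : Finset α) (f : ∀ i, E i) (p : ENNReal) :
    Memℓp (fun i => if i ∈ s then f i else 0) p :=
  (memℓp_zero (s.finite_toSet.subset fun _ hi => by_contra fun h => hi (if_neg h))).of_exponent_ge
    bot_le

theorem norm_apply_lp_single_le_opNorm {ι : Type*} [DecidableEq ι]
    (T : lp (fun _ : ι => ℂ) 2 →L[ℂ] lp (fun _ : ι => ℂ) 2) (i j : ι) :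
    ‖T (lp.single 2 i 1) j‖ ≤ ‖T‖ := by
  have h := T.le_opNorm (lp.single 2 i (1 : ℂ))
  rw [lp.norm_single (by norm_num), norm_one, mul_one] at h
  exact (lp.norm_apply_le_norm (by norm_num) _ j).trans h

theorem IsSelfAdjoint.norm_inv_le {A : Type*} [CStarAlgebra A] {u : Aˣ}
    (hu : IsSelfAdjoint (u : A)) {δ : ℝ} (hδ : 0 < δ) (hσ : ∀ z ∈ spectrum ℂ (u : A), δ ≤ ‖z‖) :
    ‖(↑u⁻¹ : A)‖ ≤ δ⁻¹ := by
  have hinv : IsSelfAdjoint (↑u⁻¹ : A) := by simpa [Ring.inverse_unit] using hu.ringInverse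
  have hrad : spectralRadius ℂ (↑u⁻¹ : A) ≤ (δ⁻¹).toNNReal := by
    refine iSup₂_le fun k hk => ?_
    rw [← spectrum.map_inv, Set.mem_inv] at hk
    have hk' : ‖k‖ ≤ δ⁻¹ := le_inv_of_le_inv₀ hδ (norm_inv k ▸ hσ _ hk)
    exact ENNReal.coe_le_coe.2 ((Real.le_toNNReal_iff_coe_le (by positivity)).2 hk')
  rwa [hinv.spectralRadius_eq_nnnorm, ENNReal.coe_le_coe,
    Real.le_toNNReal_iff_coe_le (by positivity)] at hrad

section SelfAdjoint

variable {E : Type*} [NormedAddCommGroup E] [InnerProductSpace ℂ E] [CompleteSpace E]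

theorem IsSelfAdjoint.mul_norm_le_norm_apply {T : E →L[ℂ] E} (hT : IsSelfAdjoint T) {δ : ℝ}
    (hδ : 0 < δ) (hσ : ∀ z ∈ spectrum ℂ T, δ ≤ ‖z‖) (x : E) : δ * ‖x‖ ≤ ‖T x‖ := by
  obtain ⟨u, rfl⟩ : IsUnit T :=
    (spectrum.zero_notMem_iff ℂ).1 fun h => by simpa using hδ.trans_le (hσ 0 h)
  calc δ * ‖x‖ = δ * ‖(↑u⁻¹ : E →L[ℂ] E) ((u : E →L[ℂ] E) x)‖ := by
        rw [← mul_apply_eq_comp, Units.inv_mul, one_apply_eq_self]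
    _ ≤ δ * (δ⁻¹ * ‖(u : E →L[ℂ] E) x‖) := by
        gcongr
        exact ((u⁻¹ : (E →L[ℂ] E)ˣ) : E →L[ℂ] E).le_of_opNorm_le (hT.norm_inv_le hδ hσ) _
    _ = ‖(u : E →L[ℂ] E) x‖ := by field_simp

theorem IsSelfAdjoint.exists_mem_spectrum_norm_sub_lt {T : E →L[ℂ] E} (hT : IsSelfAdjoint T)
    {t δ : ℝ} {x : E} (hx : ‖(t : ℂ) • x - T x‖ < δ * ‖x‖) :
    ∃ z ∈ spectrum ℂ T, ‖z - t‖ < δ := by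
  have hδ : 0 < δ := pos_of_mul_pos_left ((norm_nonneg _).trans_lt hx) (norm_nonneg x)
  by_contra! hσ
  have hshift : IsSelfAdjoint (algebraMap ℂ (E →L[ℂ] E) t - T) :=
    (IsSelfAdjoint.algebraMap _ (Complex.conj_ofReal t)).sub hT
  refine hx.not_ge (hshift.mul_norm_le_norm_apply hδ (fun z hz => ?_) x)
  rw [← spectrum.singleton_sub_eq] at hz
  obtain ⟨_, rfl, w, hw, rfl⟩ := hz
  rw [norm_sub_rev]
  exact hσ w hw

end SelfAdjoint

theorem exists_eq_add_two_mul_mul_cos {c α t : ℝ} (hα : 0 < α) (ht : |t - c| ≤ 2 * α) :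
    ∃ θ, t = c + 2 * α * Real.cos θ := by
  obtain ⟨h₁, h₂⟩ := abs_le.1 ht
  refine ⟨Real.arccos ((t - c) / (2 * α)), ?_⟩
  rw [Real.cos_arccos (by rw [le_div_iff₀ (by positivity)]; linarith)
    (by rw [div_le_one (by positivity)]; linarith)]
  field_simp
  ring

theorem abs_sub_le_iSup_sub {ι : Type*} {f : ι → ℝ} {C : ℝ} (hf : ∀ i, |f i| ≤ C) (i j : ι) :
    |f i - f j| ≤ ⨆ q : ι × ι, (f q.1 - f q.2) := by
  have hbdd : BddAbove (Set.range fun q : ι × ι => f q.1 - f q.2) := by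
    refine ⟨2 * C, ?_⟩
    rintro _ ⟨q, rfl⟩
    linarith [(abs_le.1 (hf q.1)).2, (abs_le.1 (hf q.2)).1]
  exact abs_sub_le_iff.2 ⟨le_ciSup hbdd (i, j), le_ciSup hbdd (j, i)⟩

def jacobiAction (a b : ℤ → ℝ) (y : ℤ → ℂ) (n : ℤ) : ℂ :=
  a (n - 1) * y (n - 1) + b n * y n + a n * y (n + 1)

theorem norm_smul_sub_jacobiAction_planeWave_le {a b : ℤ → ℝ} {c α ρa ρb t θ : ℝ}
    (ha : ∀ n, |a n - α| ≤ ρa) (hb : ∀ n, |b n - c| ≤ ρb) (hθ : t = c + 2 * α * Real.cos θ)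
    (n : ℤ) : ‖t * planeWave θ n - jacobiAction a b (planeWave θ) n‖ ≤ 2 * ρa + ρb := by
  have hres : t * planeWave θ n - jacobiAction a b (planeWave θ) n
      = -((a (n - 1) - α : ℝ) * planeWave θ (n - 1) + (b n - c : ℝ) * planeWave θ n
        + (a n - α : ℝ) * planeWave θ (n + 1)) := by
    rw [jacobiAction, hθ]
    push_cast
    linear_combination -(α : ℂ) * planeWave_sub_one_add_planeWave_add_one θ n
  rw [hres, norm_neg]
  refine (norm_add₃_le ..).trans ?_
  simp only [norm_mul, Complex.norm_real, Real.norm_eq_abs, norm_planeWave, mul_one]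
  linarith [ha (n - 1), hb n, ha n]

theorem norm_smul_sub_jacobiAction_le {a b : ℤ → ℝ} {C : ℝ} (ha : ∀ n, |a n| ≤ C)
    (hb : ∀ n, |b n| ≤ C) {y : ℤ → ℂ} (hy : ∀ n, ‖y n‖ ≤ 1) (t : ℝ) (n : ℤ) :
    ‖t * y n - jacobiAction a b y n‖ ≤ |t| + 3 * C := by
  have hterm : ∀ (r : ℝ) (k : ℤ), ‖(r : ℂ) * y k‖ ≤ |r| := fun r k => by
    rw [norm_mul, Complex.norm_real, Real.norm_eq_abs]
    exact mul_le_of_le_one_right (abs_nonneg r) (hy k)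
  calc ‖t * y n - jacobiAction a b y n‖ ≤ ‖(t : ℂ) * y n‖ + ‖jacobiAction a b y n‖ :=
        norm_sub_le _ _
    _ ≤ |t| + (C + C + C) := by
        gcongr
        · exact hterm t n
        · exact (norm_add₃_le ..).trans (add_le_add_three ((hterm _ _).trans (ha _))
            ((hterm _ _).trans (hb _)) ((hterm _ _).trans (ha _)))
    _ = |t| + 3 * C := by ring

def IsJacobi (a b : ℤ → ℝ) (J : ℓ² →L[ℂ] ℓ²) : Prop :=
  ∀ y : ℓ², ⇑(J y) = jacobiAction a b y

namespace IsJacobi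

variable {a b : ℤ → ℝ} {J : ℓ² →L[ℂ] ℓ²}

theorem ext {J' : ℓ² →L[ℂ] ℓ²} (hJ : IsJacobi a b J) (hJ' : IsJacobi a b J') : J = J' := by
  ext y : 1
  exact lp.ext (by rw [hJ, hJ'])

theorem apply_single (hJ : IsJacobi a b J) (m : ℤ) :
    J (lp.single 2 m 1) = (a (m - 1) : ℂ) • lp.single 2 (m - 1) 1 + (b m : ℂ) • lp.single 2 m 1
      + (a m : ℂ) • lp.single 2 (m + 1) 1 := by
  refine lp.ext (funext fun n => ?_)
  simp only [hJ _, jacobiAction, lp.coeFn_add, lp.coeFn_smul, lp.coeFn_single, Pi.add_apply,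
    Pi.smul_apply, Pi.single_apply, smul_eq_mul, mul_ite, mul_one, mul_zero]
  split_ifs <;> first | (exfalso; omega) | (subst_vars; simp)

theorem adjoint (hJ : IsJacobi a b J) : IsJacobi a b (ContinuousLinearMap.adjoint J) := by
  have hcoord : ∀ (z : ℓ²) (k : ℤ), z k = inner ℂ (lp.single 2 k (1 : ℂ)) z := by
    simp [lp.inner_single_left]
  refine fun y => funext fun n => ?_
  rw [hcoord, ContinuousLinearMap.adjoint_inner_right, hJ.apply_single]
  simp only [inner_add_left, inner_smul_left, ← hcoord, Complex.conj_ofReal, jacobiAction]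

theorem isSelfAdjoint (hJ : IsJacobi a b J) : IsSelfAdjoint J :=
  hJ.adjoint.ext hJ

theorem abs_le_opNorm (hJ : IsJacobi a b J) (n : ℤ) : |a n| ≤ ‖J‖ ∧ |b n| ≤ ‖J‖ := by
  have ha := norm_apply_lp_single_le_opNorm J (n + 1) n
  have hb := norm_apply_lp_single_le_opNorm J n n
  simp only [hJ _, jacobiAction, lp.coeFn_single, Pi.single_apply] at ha hb
  constructor
  · simpa [show n - 1 ≠ n + 1 by omega] using ha
  · simpa using hb

theorem sub_algebraMap (hJ : IsJacobi a b J) (c : ℝ) :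
    IsJacobi a (fun n => b n - c) (J - algebraMap ℂ (ℓ² →L[ℂ] ℓ²) c) := by
  refine fun y => funext fun n => ?_
  rw [sub_apply, lp.coeFn_sub, Pi.sub_apply, hJ y, Algebra.algebraMap_eq_smul_one, smul_apply,
    lp.coeFn_smul]
  simp only [one_apply_eq_self, Pi.smul_apply, smul_eq_mul, Complex.ofReal_sub, jacobiAction]
  ring

theorem norm_apply_le (hJ : IsJacobi a b J) {A B : ℝ} (hA : ∀ n, |a n| ≤ A)
    (hB : ∀ n, |b n| ≤ B) (x : ℓ²) : ‖J x‖ ≤ (2 * A + B) * ‖x‖ := by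
  have hA0 : 0 ≤ A := (abs_nonneg _).trans (hA 0)
  have hB0 : 0 ≤ B := (abs_nonneg _).trans (hB 0)
  set u : ℤ → ℝ := fun n => ‖x n‖
  have hu : Summable fun n => u n ^ 2 := lp.summable_norm_sq x
  have hshift : ∀ k : ℤ, (Summable fun n => u (n + k) ^ 2) ∧ ∑' n, u (n + k) ^ 2 = ‖x‖ ^ 2 :=
    fun k => ⟨(Equiv.addRight k).summable_iff.2 hu,
      ((Equiv.addRight k).tsum_eq (fun n => u n ^ 2)).trans (lp.norm_sq_eq_tsum x).symm⟩
  have hpoint : ∀ n, ‖J x n‖ ^ 2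
      ≤ (2 * A + B) * (A * u (n + -1) ^ 2 + B * u n ^ 2 + A * u (n + 1) ^ 2) := by
    intro n
    have htri : ‖J x n‖ ≤ A * u (n + -1) + B * u n + A * u (n + 1) := by
      rw [hJ, jacobiAction, ← sub_eq_add_neg]
      refine (norm_add₃_le ..).trans ?_
      simp only [norm_mul, Complex.norm_real, Real.norm_eq_abs]
      gcongr
      exacts [hA _, hB _, hA _]
    exact (pow_le_pow_left₀ (norm_nonneg _) htri 2).trans (sq_mul_add_mul_add_mul_le hA0 hB0)
  obtain ⟨hs₁, ht₁⟩ := hshift (-1)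
  obtain ⟨hs₂, ht₂⟩ := hshift 1
  have hsq : ‖J x‖ ^ 2 ≤ ((2 * A + B) * ‖x‖) ^ 2 :=
    calc ‖J x‖ ^ 2 = ∑' n, ‖J x n‖ ^ 2 := lp.norm_sq_eq_tsum _
      _ ≤ ∑' n, (2 * A + B) * (A * u (n + -1) ^ 2 + B * u n ^ 2 + A * u (n + 1) ^ 2) :=
        (lp.summable_norm_sq _).tsum_le_tsum hpoint
          ((((hs₁.mul_left A).add (hu.mul_left B)).add (hs₂.mul_left A)).mul_left _)
      _ = ((2 * A + B) * ‖x‖) ^ 2 := by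
        rw [tsum_mul_left, ((hs₁.mul_left A).add (hu.mul_left B)).tsum_add (hs₂.mul_left A),
          (hs₁.mul_left A).tsum_add (hu.mul_left B), tsum_mul_left, tsum_mul_left, tsum_mul_left,
          ht₁, ht₂, ← lp.norm_sq_eq_tsum x]
        ring
  exact (pow_le_pow_iff_left₀ (norm_nonneg _) (by positivity) two_ne_zero).1 hsq

theorem norm_sub_le_of_mem_spectrum (hJ : IsJacobi a b J) {c A B : ℝ} (hA : ∀ n, |a n| ≤ A)
    (hB : ∀ n, |b n - c| ≤ B) {z : ℂ} (hz : z ∈ spectrum ℂ J) : ‖z - c‖ ≤ 2 * A + B := by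
  have hA0 : 0 ≤ A := (abs_nonneg _).trans (hA 0)
  have hB0 : 0 ≤ B := (abs_nonneg _).trans (hB 0)
  have hmem : z - c ∈ spectrum ℂ (J - algebraMap ℂ (ℓ² →L[ℂ] ℓ²) c) := by
    rw [← spectrum.sub_singleton_eq]
    exact Set.sub_mem_sub hz rfl
  calc ‖z - c‖ ≤ ‖J - algebraMap ℂ (ℓ² →L[ℂ] ℓ²) c‖ * ‖(1 : ℓ² →L[ℂ] ℓ²)‖ := by
        simpa using spectrum.subset_closedBall_norm_mul _ hmem
    _ ≤ (2 * A + B) * 1 := by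
        gcongr
        · exact ContinuousLinearMap.opNorm_le_bound _ (by positivity)
            ((hJ.sub_algebraMap c).norm_apply_le hA hB)
        · exact ContinuousLinearMap.norm_id_le
    _ = 2 * A + B := mul_one _

theorem exists_sq_norm_sub_le (hJ : IsJacobi a b J) {c α ρa ρb t θ : ℝ}
    (ha : ∀ n, |a n - α| ≤ ρa) (hb : ∀ n, |b n - c| ≤ ρb) (hθ : t = c + 2 * α * Real.cos θ)
    (N : ℕ) : ∃ x : ℓ², ‖x‖ ^ 2 = 2 * N + 1 ∧
      ‖(t : ℂ) • x - J x‖ ^ 2 ≤ (2 * N + 1) * (2 * ρa + ρb) ^ 2 + 4 * (|t| + 3 * ‖J‖) ^ 2 := by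
  classical
  set S := Finset.Icc (-N : ℤ) N
  set f : ℤ → ℂ := fun n => if n ∈ S then planeWave θ n else 0
  have hf : ∀ n, ‖f n‖ ≤ 1 := fun n => by
    simp only [f]
    split_ifs <;> simp [norm_planeWave]
  set x : ℓ² := ⟨f, memℓp_ite_mem S _ 2⟩
  set w : ℤ → ℂ := fun n => t * f n - jacobiAction a b f n
  have hw : ⇑((t : ℂ) • x - J x) = w := by
    rw [lp.coeFn_sub, lp.coeFn_smul, hJ]
    rfl
  have hbulk : ∀ n ∈ Finset.Icc (-N + 1 : ℤ) (N - 1), ‖w n‖ ≤ 2 * ρa + ρb := by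
    intro n hn
    rw [Finset.mem_Icc] at hn
    have hwn : w n = t * planeWave θ n - jacobiAction a b (planeWave θ) n := by
      simp only [w, jacobiAction, f, S, Finset.mem_Icc]
      rw [if_pos (by omega), if_pos (by omega), if_pos (by omega)]
    rw [hwn]
    exact norm_smul_sub_jacobiAction_planeWave_le ha hb hθ n
  have hedge : ∀ n, ‖w n‖ ≤ |t| + 3 * ‖J‖ :=
    norm_smul_sub_jacobiAction_le (fun n => (hJ.abs_le_opNorm n).1)
      (fun n => (hJ.abs_le_opNorm n).2) hf t
  have hsupp : ∀ n ∉ Finset.Icc (-N - 1 : ℤ) (N + 1), w n = 0 := by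
    intro n hn
    rw [Finset.mem_Icc] at hn
    simp only [w, jacobiAction, f, S, Finset.mem_Icc]
    rw [if_neg (by omega), if_neg (by omega), if_neg (by omega)]
    ring
  refine ⟨x, ?_, ?_⟩
  · rw [lp.norm_sq_eq_sum_of_support_subset x (s := S) fun n hn => if_neg hn,
      Finset.sum_congr rfl fun n hn => by rw [show x n = planeWave θ n from if_pos hn,
        norm_planeWave, one_pow], Finset.sum_const, nsmul_one, Int.card_Icc]
    exact_mod_cast (by omega : ((N : ℤ) + 1 - -N).toNat = 2 * N + 1)
  · rw [lp.norm_sq_eq_sum_of_support_subset _ fun n hn => hw ▸ hsupp n hn, hw]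
    exact sum_Icc_le_of_le_of_le N (by positivity) (by positivity)
      (fun n hn => pow_le_pow_left₀ (norm_nonneg _) (hbulk n hn) 2)
      (fun n => pow_le_pow_left₀ (norm_nonneg _) (hedge n) 2)

theorem exists_norm_sub_lt (hJ : IsJacobi a b J) {c α ρa ρb t δ : ℝ} (hα : 0 < α)
    (ha : ∀ n, |a n - α| ≤ ρa) (hb : ∀ n, |b n - c| ≤ ρb) (ht : |t - c| ≤ 2 * α)
    (hδ : 2 * ρa + ρb < δ) : ∃ x : ℓ², ‖(t : ℂ) • x - J x‖ < δ * ‖x‖ := by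
  obtain ⟨θ, hθ⟩ := exists_eq_add_two_mul_mul_cos hα ht
  set ρ := 2 * ρa + ρb
  set K := |t| + 3 * ‖J‖
  have hρ : 0 ≤ ρ := by linarith [(abs_nonneg _).trans (ha 0), (abs_nonneg _).trans (hb 0)]
  have hgap : 0 < δ ^ 2 - ρ ^ 2 := by nlinarith
  obtain ⟨N, hN⟩ := exists_nat_gt (4 * K ^ 2 / (δ ^ 2 - ρ ^ 2))
  rw [div_lt_iff₀ hgap] at hN
  obtain ⟨x, hx, hJx⟩ := hJ.exists_sq_norm_sub_le ha hb hθ N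
  refine ⟨x, lt_of_pow_lt_pow_left₀ 2 (mul_nonneg (hρ.trans hδ.le) (norm_nonneg x)) ?_⟩
  rw [mul_pow, hx]
  nlinarith

theorem exists_mem_spectrum_norm_sub_lt (hJ : IsJacobi a b J) {c α ρa ρb t δ : ℝ}
    (hα : 0 < α) (ha : ∀ n, |a n - α| ≤ ρa) (hb : ∀ n, |b n - c| ≤ ρb) (ht : |t - c| ≤ 2 * α)
    (hδ : 2 * ρa + ρb < δ) : ∃ z ∈ spectrum ℂ J, ‖z - t‖ < δ :=
  have ⟨_, hx⟩ := hJ.exists_norm_sub_lt hα ha hb ht hδ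
  hJ.isSelfAdjoint.exists_mem_spectrum_norm_sub_lt hx

theorem sub_le_of_gap (hJ : IsJacobi a b J) {c α ρa ρb μm μp : ℝ} (hα : 0 < α)
    (ha : ∀ n, |a n - α| ≤ ρa) (hb : ∀ n, |b n - c| ≤ ρb)
    (hμm : (μm : ℂ) ∈ spectrum ℂ J) (hμp : (μp : ℂ) ∈ spectrum ℂ J)
    (hgap : ∀ z ∈ spectrum ℂ J, ∀ x : ℝ, z = x → x ∉ Ioo μm μp) :
    μp - μm ≤ 2 * (2 * ρa + ρb) := by
  by_contra! hlt
  set μ := (μm + μp) / 2 with hμ_def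
  have hnorm : ∀ x y : ℝ, ‖(x : ℂ) - y‖ = |x - y| := fun x y => by
    rw [← Complex.ofReal_sub, Complex.norm_real, Real.norm_eq_abs]
  have hencl : ∀ x : ℝ, (x : ℂ) ∈ spectrum ℂ J → |x - c| ≤ 2 * (α + ρa) + ρb := fun x hx =>
    hnorm x c ▸ hJ.norm_sub_le_of_mem_spectrum
      (fun n => by linarith [abs_sub_abs_le_abs_sub (a n) α, abs_of_pos hα, ha n]) hb hx
  rcases le_or_gt |μ - c| (2 * α) with hμ | hμ
  · obtain ⟨z, hz, hzμ⟩ := hJ.exists_mem_spectrum_norm_sub_lt hα ha hb hμ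
      (show 2 * ρa + ρb < (μp - μm) / 2 by linarith)
    have hre := hJ.isSelfAdjoint.mem_spectrum_eq_re hz
    rw [hre, hnorm, abs_lt] at hzμ
    exact hgap z hz z.re hre ⟨by linarith, by linarith⟩
  · rcases lt_abs.1 hμ with hμ | hμ
    · linarith [(abs_le.1 (hencl μp hμp)).2]
    · linarith [(abs_le.1 (hencl μm hμm)).1]

end IsJacobi

theorem stmt4_general (a b : ℤ → ℝ)
    (ha_pos : ∀ j, 0 < a j)
    (J : lp (fun _ : ℤ => ℂ) 2 →L[ℂ] lp (fun _ : ℤ => ℂ) 2)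
    (hJ : ∀ (y : lp (fun _ : ℤ => ℂ) 2) (n : ℤ),
      (J y : ∀ _ : ℤ, ℂ) n = (a (n - 1) : ℂ) * (y : ∀ _ : ℤ, ℂ) (n - 1)
        + (b n : ℂ) * (y : ∀ _ : ℤ, ℂ) n + (a n : ℂ) * (y : ∀ _ : ℤ, ℂ) (n + 1))
    (μm μp : ℝ)
    (hμm : (μm : ℂ) ∈ spectrum ℂ J) (hμp : (μp : ℂ) ∈ spectrum ℂ J)
    (hgap : ∀ z ∈ spectrum ℂ J, ∀ x : ℝ, z = (x : ℂ) → x ∉ Ioo μm μp) :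
    μp - μm ≤ 2 * ((⨆ q : ℤ × ℤ, (b q.1 - b q.2)) + 2 * ⨆ q : ℤ × ℤ, (a q.1 - a q.2)) := by
  have hJac : IsJacobi a b J := fun y => funext (hJ y)
  have hgap_le := hJac.sub_le_of_gap (ha_pos 0)
    (fun n => abs_sub_le_iSup_sub (fun n => (hJac.abs_le_opNorm n).1) n 0)
    (fun n => abs_sub_le_iSup_sub (fun n => (hJac.abs_le_opNorm n).2) n 0) hμm hμp hgap
  linarith

/-- For a bounded Jacobi operator `J` on `ℓ²(ℤ)`, the length of any gap
`(μ⁻, μ⁺)` in its spectrum is at most `2(ω_b + 2 ω_a)`, where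
`ω_c = sup_{i,j} (c i - c j)` is the variation of the sequence `c`. -/
theorem stmt4 (a b : ℤ → ℝ)
    (ha_pos : ∀ j, 0 < a j)
    (ha_bdd : ∃ C, ∀ j, |a j| ≤ C) (hb_bdd : ∃ C, ∀ j, |b j| ≤ C)
    (J : lp (fun _ : ℤ => ℂ) 2 →L[ℂ] lp (fun _ : ℤ => ℂ) 2)
    (hJ : ∀ (y : lp (fun _ : ℤ => ℂ) 2) (n : ℤ),
      (J y : ∀ _ : ℤ, ℂ) n = (a (n - 1) : ℂ) * (y : ∀ _ : ℤ, ℂ) (n - 1)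
        + (b n : ℂ) * (y : ∀ _ : ℤ, ℂ) n + (a n : ℂ) * (y : ∀ _ : ℤ, ℂ) (n + 1))
    (μm μp : ℝ)
    (hμm : (μm : ℂ) ∈ spectrum ℂ J) (hμp : (μp : ℂ) ∈ spectrum ℂ J)
    (hgap : ∀ z ∈ spectrum ℂ J, ∀ x : ℝ, z = (x : ℂ) → x ∉ Ioo μm μp) :
    μp - μm ≤ 2 * ((⨆ q : ℤ × ℤ, (b q.1 - b q.2)) + 2 * ⨆ q : ℤ × ℤ, (a q.1 - a q.2)) :=
  stmt4_general a b ha_pos J hJ μm μp hμm hμp hgap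
end

section
/- Let D be a real polynomial of degree p ≥ 1 on an interval L = [u, v] with ‖D‖ := max_{t∈L}|D(t)| = 2M for some M > 1, and suppose D attains the value ±2M at an interior critical point ν ∈ (μ⁻, μ⁺) ⊂ L with D′(ν) = 0 and |D(μ⁺)| = 2. Then, using Markov's inequality ‖D″‖ ≤ 4p⁴M/|L|² (for degree-p polynomials on L), one gets (μ⁺ − ν)² ≥ 4(M−1)/‖D″‖ ≥ (|L|²/p⁴)·(M−1)/M, hence μ⁺ − ν ≥ (|L|/p²)√((M−1)/M). -/
/-!
Taylor's formula at the critical point `ν` gives `D μ⁺ - D ν = D''(ξ) (μ⁺ - ν)² / 2` for some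
`ξ ∈ (ν, μ⁺)`; since `D ν = ±2M` and `D μ⁺ = ±2` with the same sign, the left side has absolute
value `2 (M - 1)`, whence `(μ⁺ - ν)² ≥ 4 (M - 1) / ‖D''‖`.

The remaining input is the Markov-type bound `‖Q''‖ ≤ p⁴/2 · ‖Q‖` on `[-1, 1]` for polynomials of
degree `≤ p`, rescaled to `[u, v]`. Near `±1` it follows from the extremality of the Chebyshev
polynomial at the endpoint, `|Q''(1)| ≤ T_p''(1) = p² (p² - 1) / 3`. For `|x| ≤ 2/3` it follows from
Bernstein's inequality `‖T'‖ ≤ p ‖T‖` for the trigonometric polynomial `T θ = Q (cos θ)`, which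
in turn comes from M. Riesz's interpolation formula expressing `T'` as an alternating combination
of translates of `T` with weights of total mass `4p²`.
-/

open Set Polynomial Real

noncomputable def rieszNode (n k : ℕ) : ℝ := (2 * k + 1) * π / (2 * n)

noncomputable def rieszWeight (n k : ℕ) : ℝ := 1 / sin (rieszNode n k / 2) ^ 2

noncomputable def rieszSineSum (n j : ℕ) : ℝ :=
  ∑ k ∈ Finset.range (2 * n), (-1) ^ k * rieszWeight n k * sin (j * rieszNode n k)

section RieszNodes

variable {n : ℕ}

lemma sin_half_rieszNode_pos {k : ℕ} (hk : k < 2 * n) : 0 < sin (rieszNode n k / 2) := by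
  have hn : (0 : ℝ) < n := by exact_mod_cast (show 0 < n by omega)
  have hk' : (2 * k + 1 : ℝ) < 4 * n := by exact_mod_cast (show 2 * k + 1 < 4 * n by omega)
  apply sin_pos_of_pos_of_lt_pi
  · unfold rieszNode; positivity
  · rw [rieszNode, div_div, div_lt_iff₀ (by positivity)]
    nlinarith [pi_pos]

lemma rieszWeight_pos {k : ℕ} (hk : k < 2 * n) : 0 < rieszWeight n k := by
  have := sin_half_rieszNode_pos hk
  unfold rieszWeight
  positivity

lemma rieszWeight_mul_cos_rieszNode {k : ℕ} (hk : k < 2 * n) :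
    rieszWeight n k * cos (rieszNode n k) = rieszWeight n k - 2 := by
  have hs := (sin_half_rieszNode_pos hk).ne'
  have hcos : cos (rieszNode n k) = 1 - 2 * sin (rieszNode n k / 2) ^ 2 := by
    have h := cos_two_mul (rieszNode n k / 2)
    rw [mul_div_cancel₀ _ two_ne_zero, cos_sq'] at h
    linarith
  rw [hcos, rieszWeight]
  field_simp

lemma sin_mul_rieszNode_self (hn : n ≠ 0) (k : ℕ) : sin (n * rieszNode n k) = (-1) ^ k := by
  have : (n : ℝ) * rieszNode n k = k * π + π / 2 := by
    unfold rieszNode; field_simp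
  rw [this, sin_add_pi_div_two, cos_nat_mul_pi]

lemma rieszNode_reflect {k : ℕ} (hk : k < 2 * n) :
    rieszNode n (2 * n - 1 - k) = 2 * π - rieszNode n k := by
  have hn : (n : ℝ) ≠ 0 := by exact_mod_cast (show n ≠ 0 by omega)
  have hcast : ((2 * n - 1 - k : ℕ) : ℝ) = 2 * n - 1 - k := by
    rw [Nat.cast_sub (by omega), Nat.cast_sub (by omega)]; push_cast; ring
  unfold rieszNode
  rw [hcast]
  field_simp
  ring

lemma neg_one_pow_reflect {k : ℕ} (hk : k < 2 * n) :
    (-1 : ℝ) ^ (2 * n - 1 - k) = -(-1) ^ k := by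
  have h : (-1 : ℝ) ^ (2 * n - 1 - k) * (-1) ^ k = -1 := by
    rw [← pow_add, show 2 * n - 1 - k + k = 2 * (n - 1) + 1 by omega, pow_succ, pow_mul]
    norm_num
  calc (-1 : ℝ) ^ (2 * n - 1 - k) = (-1) ^ (2 * n - 1 - k) * ((-1) ^ k * (-1) ^ k) := by
        rw [← pow_add, ← two_mul, pow_mul]; norm_num
    _ = -(-1) ^ k := by rw [← mul_assoc, h, neg_one_mul]

lemma rieszWeight_reflect {k : ℕ} (hk : k < 2 * n) :
    rieszWeight n (2 * n - 1 - k) = rieszWeight n k := by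
  rw [rieszWeight, rieszWeight, rieszNode_reflect hk,
    show (2 * π - rieszNode n k) / 2 = π - rieszNode n k / 2 by ring, sin_pi_sub]

lemma sum_neg_one_pow_mul_rieszWeight_mul_cos (j : ℕ) :
    ∑ k ∈ Finset.range (2 * n), (-1) ^ k * rieszWeight n k * cos (j * rieszNode n k) = 0 := by
  set f : ℕ → ℝ := fun k => (-1) ^ k * rieszWeight n k * cos (j * rieszNode n k)
  have hf : ∀ k ∈ Finset.range (2 * n), f (2 * n - 1 - k) = -f k := by
    intro k hk
    have hk := Finset.mem_range.mp hk
    simp only [f, neg_one_pow_reflect hk, rieszWeight_reflect hk, rieszNode_reflect hk,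
      mul_sub, cos_nat_mul_two_pi_sub]
    ring
  have := Finset.sum_range_reflect f (2 * n)
  rw [Finset.sum_congr rfl hf, Finset.sum_neg_distrib] at this
  linarith

lemma sum_neg_one_pow_mul_sin_mul_rieszNode {m : ℕ} (hm : 0 < m) (hmn : m < n) :
    ∑ k ∈ Finset.range (2 * n), (-1) ^ k * sin (m * rieszNode n k) = 0 := by
  set c : ℝ := m * π / (2 * n)
  have hn : (0 : ℝ) < n := by exact_mod_cast (show 0 < n by omega)
  have hcos : 0 < cos c := by
    have hmn' : (m : ℝ) < n := by exact_mod_cast hmn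
    have hc : 0 < c := by positivity
    apply cos_pos_of_mem_Ioo ⟨by linarith [pi_pos], ?_⟩
    rw [div_lt_div_iff₀ (by positivity) two_pos]
    nlinarith [pi_pos]
  set F : ℕ → ℝ := fun k => (-1) ^ k * sin (2 * k * c)
  -- `2 cos c · sin ((2k+1) c) = sin ((2k+2) c) + sin (2k c)` makes the sum telescope
  have htel : ∀ k, 2 * cos c * ((-1) ^ k * sin (m * rieszNode n k)) = F k - F (k + 1) := by
    intro k
    have harg : (m : ℝ) * rieszNode n k = (2 * k + 1) * c := by
      unfold rieszNode c; field_simp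
    simp only [F, harg, pow_succ]
    push_cast
    rw [show 2 * ((k : ℝ) + 1) * c = (2 * k + 1) * c + c by ring,
      show 2 * (k : ℝ) * c = (2 * k + 1) * c - c by ring, sin_add, sin_sub]
    ring
  have hF : F (2 * n) = 0 := by
    have : 2 * ((2 * n : ℕ) : ℝ) * c = (2 * m : ℕ) * π := by
      simp only [c]; push_cast; field_simp
    simp only [F, this, sin_nat_mul_pi, mul_zero]
  have := Finset.sum_range_sub' F (2 * n)
  rw [← Finset.sum_congr rfl (fun k _ => htel k), ← Finset.mul_sum, hF] at this
  simpa [F, hcos.ne'] using this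

lemma rieszSineSum_add_two (j : ℕ) :
    rieszSineSum n (j + 2) = 2 * rieszSineSum n (j + 1) - rieszSineSum n j
      - 4 * ∑ k ∈ Finset.range (2 * n), (-1) ^ k * sin ((j + 1 : ℕ) * rieszNode n k) := by
  simp only [rieszSineSum, Finset.mul_sum, ← Finset.sum_sub_distrib]
  refine Finset.sum_congr rfl fun k hk => ?_
  have hw := rieszWeight_mul_cos_rieszNode (Finset.mem_range.mp hk)
  have hsin : sin ((j + 2 : ℕ) * rieszNode n k) + sin (j * rieszNode n k)
      = 2 * sin ((j + 1 : ℕ) * rieszNode n k) * cos (rieszNode n k) := by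
    push_cast
    rw [show ((j : ℝ) + 2) * rieszNode n k = (j + 1) * rieszNode n k + rieszNode n k by ring,
      show (j : ℝ) * rieszNode n k = (j + 1) * rieszNode n k - rieszNode n k by ring,
      sin_add, sin_sub]
    ring
  linear_combination (-1) ^ k * rieszWeight n k * hsin
    + 2 * (-1) ^ k * sin ((j + 1 : ℕ) * rieszNode n k) * hw

lemma rieszSineSum_reflect (m : ℕ) : rieszSineSum (m + 1) (m + 2) = rieszSineSum (m + 1) m := by
  refine Finset.sum_congr rfl fun k _ => ?_
  -- the nodes satisfy `(m + 2) t + m t = (2k + 1) π`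
  have harg : ((m + 2 : ℕ) : ℝ) * rieszNode (m + 1) k
      = π - m * rieszNode (m + 1) k + k * (2 * π) := by
    unfold rieszNode; push_cast; field_simp; ring
  rw [harg, sin_add_nat_mul_two_pi, sin_pi_sub]

lemma rieszSineSum_eq_mul {j : ℕ} (hj : j ≤ n) : rieszSineSum n j = j * rieszSineSum n 1 := by
  induction j using Nat.strong_induction_on with
  | _ j ih =>
    match j, ih with
    | 0, _ => simp [rieszSineSum]
    | 1, _ => simp
    | j + 2, ih =>
      rw [rieszSineSum_add_two, ih (j + 1) (by omega) (by omega), ih j (by omega) (by omega),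
        sum_neg_one_pow_mul_sin_mul_rieszNode (by omega) (by omega)]
      push_cast
      ring

lemma rieszSineSum_eq {j : ℕ} (hj : j ≤ n) : rieszSineSum n j = 4 * n * j := by
  obtain rfl | hn := eq_or_ne n 0
  · simp [rieszSineSum]
  obtain ⟨m, rfl⟩ : ∃ m, n = m + 1 := ⟨n - 1, by omega⟩
  have hTn : ∑ k ∈ Finset.range (2 * (m + 1)), (-1) ^ k * sin ((m + 1 : ℕ) * rieszNode (m + 1) k)
      = 2 * (m + 1 : ℕ) := by
    simp only [sin_mul_rieszNode_self hn, ← pow_add, ← two_mul, pow_mul]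
    simp
  have h1 : rieszSineSum (m + 1) 1 = 4 * (m + 1 : ℕ) := by
    have := rieszSineSum_add_two (n := m + 1) m
    rw [rieszSineSum_reflect, hTn, rieszSineSum_eq_mul le_rfl,
      rieszSineSum_eq_mul (by omega : m ≤ m + 1)] at this
    push_cast at this ⊢
    linarith
  rw [rieszSineSum_eq_mul hj, h1]
  ring

end RieszNodes

def trigPolys (n : ℕ) : Submodule ℝ (ℝ → ℝ) :=
  Submodule.span ℝ ((fun j : ℕ => fun x => cos (j * x)) '' Iic n ∪
    (fun j : ℕ => fun x => sin (j * x)) '' Iic n)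

section TrigPolys

variable {n : ℕ} {f : ℝ → ℝ}

lemma cos_mul_mem_trigPolys {j : ℕ} (hj : j ≤ n) : (fun x => cos (j * x)) ∈ trigPolys n :=
  Submodule.subset_span (Or.inl ⟨j, hj, rfl⟩)

lemma sin_mul_mem_trigPolys {j : ℕ} (hj : j ≤ n) : (fun x => sin (j * x)) ∈ trigPolys n :=
  Submodule.subset_span (Or.inr ⟨j, hj, rfl⟩)

lemma differentiable_of_mem_trigPolys (hf : f ∈ trigPolys n) : Differentiable ℝ f := by
  induction hf using Submodule.span_induction with
  | mem g hg =>
    obtain ⟨j, -, rfl⟩ | ⟨j, -, rfl⟩ := hg <;> fun_prop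
  | zero => exact differentiable_const 0
  | add g h _ _ hg hh => exact hg.add hh
  | smul c g _ hg => exact hg.const_smul c

lemma deriv_mem_trigPolys (hf : f ∈ trigPolys n) : deriv f ∈ trigPolys n := by
  induction hf using Submodule.span_induction with
  | mem g hg =>
    obtain ⟨j, hj, rfl⟩ | ⟨j, hj, rfl⟩ := hg
    · have : deriv (fun x => cos (j * x)) = (-(j : ℝ)) • fun x => sin (j * x) := by
        ext x
        rw [(((hasDerivAt_id' x).const_mul (j : ℝ)).cos).deriv]
        simp [mul_comm]
      rw [this]
      exact Submodule.smul_mem _ _ (sin_mul_mem_trigPolys hj)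
    · have : deriv (fun x => sin (j * x)) = (j : ℝ) • fun x => cos (j * x) := by
        ext x
        rw [(((hasDerivAt_id' x).const_mul (j : ℝ)).sin).deriv]
        simp [mul_comm]
      rw [this]
      exact Submodule.smul_mem _ _ (cos_mul_mem_trigPolys hj)
  | zero => simp
  | add g h hg' hh' hg hh =>
    rw [show deriv (g + h) = deriv g + deriv h from funext fun x =>
      deriv_add (differentiable_of_mem_trigPolys hg' x) (differentiable_of_mem_trigPolys hh' x)]
    exact Submodule.add_mem _ hg hh
  | smul c g _ hg =>
    rw [show deriv (c • g) = c • deriv g from funext fun x => deriv_const_smul_field c g]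
    exact Submodule.smul_mem _ _ hg

theorem riesz_interpolation (hf : f ∈ trigPolys n) (x : ℝ) :
    ∑ k ∈ Finset.range (2 * n), (-1) ^ k * rieszWeight n k * f (x + rieszNode n k)
      = 4 * n * deriv f x := by
  induction hf using Submodule.span_induction generalizing x with
  | mem g hg =>
    obtain ⟨j, hj, rfl⟩ | ⟨j, hj, rfl⟩ := hg
    · have hterm : ∀ k, (-1) ^ k * rieszWeight n k * cos (j * (x + rieszNode n k))
          = cos (j * x) * ((-1) ^ k * rieszWeight n k * cos (j * rieszNode n k))
            - sin (j * x) * ((-1) ^ k * rieszWeight n k * sin (j * rieszNode n k)) := by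
        intro k; rw [mul_add, cos_add]; ring
      simp only [hterm, Finset.sum_sub_distrib, ← Finset.mul_sum,
        sum_neg_one_pow_mul_rieszWeight_mul_cos, ← rieszSineSum.eq_1, rieszSineSum_eq hj]
      rw [(((hasDerivAt_id' x).const_mul (j : ℝ)).cos).deriv]
      ring
    · have hterm : ∀ k, (-1) ^ k * rieszWeight n k * sin (j * (x + rieszNode n k))
          = sin (j * x) * ((-1) ^ k * rieszWeight n k * cos (j * rieszNode n k))
            + cos (j * x) * ((-1) ^ k * rieszWeight n k * sin (j * rieszNode n k)) := by
        intro k; rw [mul_add, sin_add]; ring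
      simp only [hterm, Finset.sum_add_distrib, ← Finset.mul_sum,
        sum_neg_one_pow_mul_rieszWeight_mul_cos, ← rieszSineSum.eq_1, rieszSineSum_eq hj]
      rw [(((hasDerivAt_id' x).const_mul (j : ℝ)).sin).deriv]
      ring
  | zero => simp
  | add g h hg' hh' hg hh =>
    rw [deriv_add (differentiable_of_mem_trigPolys hg' x) (differentiable_of_mem_trigPolys hh' x)]
    simp only [Pi.add_apply, mul_add, Finset.sum_add_distrib, hg, hh]
  | smul c g _ hg =>
    rw [deriv_const_smul_field, smul_eq_mul, mul_left_comm, ← hg x, Finset.mul_sum]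
    exact Finset.sum_congr rfl fun k _ => by simp only [Pi.smul_apply, smul_eq_mul]; ring

lemma sum_rieszWeight : ∑ k ∈ Finset.range (2 * n), rieszWeight n k = 4 * n ^ 2 := by
  obtain rfl | hn := eq_or_ne n 0
  · simp
  rw [sq, ← mul_assoc, ← rieszSineSum_eq le_rfl, rieszSineSum]
  refine Finset.sum_congr rfl fun k _ => ?_
  rw [sin_mul_rieszNode_self hn, mul_comm, ← mul_assoc, ← pow_add, ← two_mul, pow_mul]
  simp

theorem abs_deriv_le_of_mem_trigPolys (hn : n ≠ 0) (hf : f ∈ trigPolys n) {B : ℝ}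
    (hB : ∀ x, |f x| ≤ B) (x : ℝ) : |deriv f x| ≤ n * B := by
  have hn' : (0 : ℝ) < n := by positivity
  have key : 4 * n * |deriv f x| ≤ 4 * n * (n * B) :=
    calc 4 * n * |deriv f x| = |∑ k ∈ Finset.range (2 * n),
          (-1) ^ k * rieszWeight n k * f (x + rieszNode n k)| := by
          rw [riesz_interpolation hf, abs_mul, abs_of_pos (by positivity : (0 : ℝ) < 4 * n)]
      _ ≤ ∑ k ∈ Finset.range (2 * n), rieszWeight n k * B := by
          refine (Finset.abs_sum_le_sum_abs _ _).trans (Finset.sum_le_sum fun k hk => ?_)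
          have hw := rieszWeight_pos (Finset.mem_range.mp hk)
          rw [abs_mul, abs_mul, abs_pow, abs_neg, abs_one, one_pow, one_mul, abs_of_pos hw]
          exact mul_le_mul_of_nonneg_left (hB _) hw.le
      _ = 4 * n * (n * B) := by rw [← Finset.sum_mul, sum_rieszWeight]; ring
  exact le_of_mul_le_mul_left key (by positivity)

open Polynomial.Chebyshev in
lemma eval_cos_mem_trigPolys {Q : ℝ[X]} (hQ : Q.natDegree ≤ n) :
    (fun θ => Q.eval (cos θ)) ∈ trigPolys n := by
  let evalCos : ℝ[X] →ₗ[ℝ] ℝ → ℝ := LinearMap.pi fun θ => leval (cos θ)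
  have hspan : Q ∈ Submodule.span ℝ (chebyshevTsequence ℝ '' Iic n) := by
    rw [Sequence.span_degreeLE _ fun i _ => by simp [chebyshevTsequence]]
    exact mem_degreeLE.mpr (degree_le_of_natDegree_le hQ)
  have := Submodule.mem_map_of_mem (f := evalCos) hspan
  rw [Submodule.map_span] at this
  refine Submodule.span_le.mpr ?_ this
  rintro _ ⟨_, ⟨j, hj, rfl⟩, rfl⟩
  have : evalCos (chebyshevTsequence ℝ j) = fun θ => cos (j * θ) := by
    ext θ
    exact_mod_cast T_real_cos θ j
  rw [this]
  exact cos_mul_mem_trigPolys hj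

end TrigPolys

open Polynomial.Chebyshev in
lemma Polynomial.Chebyshev.eval_one_derivative_derivative_T (n : ℕ) :
    (derivative (derivative (T ℝ n))).eval 1 = n ^ 2 * (n ^ 2 - 1) / 3 := by
  have h0 := congrArg (eval 1) (one_sub_X_sq_mul_iterate_derivative_T_eq_poly_in_T (R := ℝ) n 0)
  have h1 := congrArg (eval 1) (one_sub_X_sq_mul_iterate_derivative_T_eq_poly_in_T (R := ℝ) n 1)
  simp only [Function.iterate_succ, Function.iterate_zero, Function.comp_apply, id_eq, eval_mul,
    eval_sub, eval_add, eval_pow, eval_X, eval_one, eval_natCast, eval_ofNat, eval_intCast,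
    T_eval_one] at h0 h1
  linear_combination (-1 / 3 : ℝ) * h1 - ((n : ℝ) ^ 2 - 1) / 3 * h0

section Markov

variable {n : ℕ} {Q : ℝ[X]}

lemma natDegree_comp_linear_le (Q : ℝ[X]) (α β : ℝ) :
    (Q.comp (C α * X + C β)).natDegree ≤ Q.natDegree :=
  natDegree_comp_le.trans (by nlinarith [natDegree_linear_le (a := α) (b := β)])

lemma eval_derivative_derivative_comp_linear (Q : ℝ[X]) (α β y : ℝ) :
    (derivative (derivative (Q.comp (C α * X + C β)))).eval y
      = α ^ 2 * (derivative (derivative Q)).eval (α * y + β) := by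
  simp only [derivative_comp, derivative_add, derivative_mul, derivative_C, derivative_X,
    zero_mul, zero_add, mul_one, add_zero, eval_mul, eval_C, eval_comp, eval_add, eval_X]
  ring

lemma abs_eval_one_derivative_derivative_le (hQ : Q.natDegree ≤ n)
    (hbound : ∀ x ∈ Icc (-1 : ℝ) 1, |Q.eval x| ≤ 1) :
    |(derivative (derivative Q)).eval 1| ≤ n ^ 2 * (n ^ 2 - 1) / 3 := by
  have hdeg : Q.degree ≤ n := degree_le_of_natDegree_le hQ
  have hle := Chebyshev.eval_iterate_derivative_le_of_forall_abs_le_one (k := 2) le_rfl hdeg hbound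
  have hge := Chebyshev.eval_iterate_derivative_le_of_forall_abs_le_one (k := 2) le_rfl
    (P := -Q) (by rwa [degree_neg]) (by simpa using hbound)
  simp only [Function.iterate_succ, Function.iterate_zero, Function.comp_apply, id,
    derivative_neg, eval_neg, Chebyshev.eval_one_derivative_derivative_T] at hle hge
  exact abs_le.mpr ⟨by linarith, hle⟩

lemma sq_mul_abs_eval_derivative_derivative_le (hQ : Q.natDegree ≤ n)
    (hbound : ∀ x ∈ Icc (-1 : ℝ) 1, |Q.eval x| ≤ 1) {α β : ℝ}
    (hαβ : ∀ y ∈ Icc (-1 : ℝ) 1, α * y + β ∈ Icc (-1 : ℝ) 1) :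
    α ^ 2 * |(derivative (derivative Q)).eval (α + β)| ≤ n ^ 2 * (n ^ 2 - 1) / 3 := by
  have h := abs_eval_one_derivative_derivative_le
    ((natDegree_comp_linear_le Q α β).trans hQ) fun y hy => by
      simpa using hbound _ (hαβ y hy)
  rwa [eval_derivative_derivative_comp_linear, abs_mul, abs_of_nonneg (sq_nonneg α), mul_one]
    at h

lemma one_add_abs_sq_mul_abs_eval_derivative_derivative_le (hQ : Q.natDegree ≤ n)
    (hbound : ∀ x ∈ Icc (-1 : ℝ) 1, |Q.eval x| ≤ 1) {x : ℝ} (hx : x ∈ Icc (-1 : ℝ) 1) :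
    (1 + |x|) ^ 2 * |(derivative (derivative Q)).eval x| ≤ 4 * (n ^ 2 * (n ^ 2 - 1) / 3) := by
  -- rescale the longer of `[-1, x]` and `[x, 1]` onto `[-1, 1]`, with `x` as the image of `1`
  rcases le_total 0 x with h | h
  · have := sq_mul_abs_eval_derivative_derivative_le hQ hbound (α := (x + 1) / 2)
      (β := (x - 1) / 2) fun y hy => ⟨by nlinarith [hy.1, hx.2], by nlinarith [hy.2, hx.2]⟩
    rw [show (x + 1) / 2 + (x - 1) / 2 = x by ring] at this
    rw [abs_of_nonneg h]
    linarith
  · have := sq_mul_abs_eval_derivative_derivative_le hQ hbound (α := (x - 1) / 2)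
      (β := (x + 1) / 2) fun y hy => ⟨by nlinarith [hy.2, hx.1], by nlinarith [hy.1, hx.1]⟩
    rw [show (x - 1) / 2 + (x + 1) / 2 = x by ring] at this
    rw [abs_of_nonpos h]
    linarith

lemma hasDerivAt_eval_cos (Q : ℝ[X]) (θ : ℝ) :
    HasDerivAt (fun θ => Q.eval (cos θ)) (-sin θ * (derivative Q).eval (cos θ)) θ :=
  ((Q.hasDerivAt (cos θ)).comp θ (hasDerivAt_cos θ)).congr_deriv (mul_comm _ _)

lemma abs_sin_mul_eval_derivative_cos_le (hn : n ≠ 0) (hQ : Q.natDegree ≤ n)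
    (hbound : ∀ x ∈ Icc (-1 : ℝ) 1, |Q.eval x| ≤ 1) (θ : ℝ) :
    |sin θ * (derivative Q).eval (cos θ)| ≤ n := by
  have hg := abs_deriv_le_of_mem_trigPolys hn (eval_cos_mem_trigPolys hQ)
    (fun θ => hbound _ ⟨neg_one_le_cos θ, cos_le_one θ⟩) θ
  rwa [(hasDerivAt_eval_cos Q θ).deriv, neg_mul, abs_neg, mul_one] at hg

lemma abs_sin_sq_mul_eval_derivative_derivative_cos_sub_le (hn : n ≠ 0) (hQ : Q.natDegree ≤ n)
    (hbound : ∀ x ∈ Icc (-1 : ℝ) 1, |Q.eval x| ≤ 1) (θ : ℝ) :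
    |sin θ ^ 2 * (derivative (derivative Q)).eval (cos θ) - cos θ * (derivative Q).eval (cos θ)|
      ≤ n ^ 2 := by
  have hg := eval_cos_mem_trigPolys hQ
  have hderiv : deriv (fun θ => Q.eval (cos θ)) = fun θ => -sin θ * (derivative Q).eval (cos θ) :=
    funext fun θ => (hasDerivAt_eval_cos Q θ).deriv
  have h := abs_deriv_le_of_mem_trigPolys hn (deriv_mem_trigPolys hg)
    (abs_deriv_le_of_mem_trigPolys hn hg fun θ => hbound _ ⟨neg_one_le_cos θ, cos_le_one θ⟩) θ
  have h2 : HasDerivAt (fun θ => -sin θ * (derivative Q).eval (cos θ))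
      (-cos θ * (derivative Q).eval (cos θ)
        + -sin θ * (-sin θ * (derivative (derivative Q)).eval (cos θ))) θ :=
    (hasDerivAt_sin θ).neg.mul (hasDerivAt_eval_cos (derivative Q) θ)
  rw [hderiv, h2.deriv] at h
  convert h using 2 <;> ring

lemma abs_eval_derivative_derivative_le_of_abs_le (hn : 3 ≤ n) (hQ : Q.natDegree ≤ n)
    (hbound : ∀ x ∈ Icc (-1 : ℝ) 1, |Q.eval x| ≤ 1) {x : ℝ} (hx : |x| ≤ 2 / 3) :
    |(derivative (derivative Q)).eval x| ≤ n ^ 4 / 2 := by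
  have hx1 : x ∈ Icc (-1 : ℝ) 1 := abs_le.mp (hx.trans (by norm_num))
  have hcos : cos (arccos x) = x := cos_arccos hx1.1 hx1.2
  have hs : sin (arccos x) ^ 2 = 1 - x ^ 2 := by
    rw [sin_arccos, sq_sqrt (by nlinarith [abs_le.mp hx])]
  have hs0 : 0 ≤ sin (arccos x) := sin_arccos x ▸ sqrt_nonneg _
  have h1 := abs_sin_mul_eval_derivative_cos_le (by omega) hQ hbound (arccos x)
  have h2 := abs_sin_sq_mul_eval_derivative_derivative_cos_sub_le (by omega) hQ hbound (arccos x)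
  rw [hcos] at h1 h2
  set s := sin (arccos x)
  set q1 := (derivative Q).eval x
  set q2 := (derivative (derivative Q)).eval x
  have hx2 : x ^ 2 ≤ 4 / 9 := by nlinarith [sq_abs x, abs_nonneg x]
  have hxs : |x| ≤ s := abs_le_of_sq_le_sq (by linarith) hs0
  have hq2 : s ^ 2 * |q2| ≤ n ^ 2 + n :=
    calc s ^ 2 * |q2| = |s ^ 2 * q2 - x * q1 + x * q1| := by
          rw [sub_add_cancel, abs_mul, abs_of_nonneg (sq_nonneg s)]
      _ ≤ n ^ 2 + |x| * |q1| := (abs_add_le _ _).trans (by rw [abs_mul]; linarith)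
      _ ≤ n ^ 2 + |s * q1| := by
          rw [abs_mul, abs_of_nonneg hs0]; gcongr
      _ ≤ n ^ 2 + n := by linarith
  have hn' : (3 : ℝ) ≤ n := by exact_mod_cast hn
  have hpoly : 9 * ((n : ℝ) ^ 2 + n) ≤ 5 * (n ^ 4 / 2) := by
    have hn2 : 9 ≤ (n : ℝ) ^ 2 := by nlinarith
    nlinarith [mul_le_mul_of_nonneg_left hn2 (sq_nonneg (n : ℝ))]
  nlinarith [mul_le_mul_of_nonneg_right (show 5 / 9 ≤ s ^ 2 by linarith) (abs_nonneg q2)]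

theorem abs_eval_derivative_derivative_le (hQ : Q.natDegree ≤ n)
    (hbound : ∀ x ∈ Icc (-1 : ℝ) 1, |Q.eval x| ≤ 1) {x : ℝ} (hx : x ∈ Icc (-1 : ℝ) 1) :
    |(derivative (derivative Q)).eval x| ≤ n ^ 4 / 2 := by
  have hT : (n : ℝ) ^ 2 * (n ^ 2 - 1) / 3 ≤ n ^ 4 / 3 := by nlinarith [sq_nonneg (n : ℝ)]
  have hn4 : (0 : ℝ) ≤ n ^ 4 := by positivity
  rcases le_or_gt n 2 with hn | hn
  · have hconst : (derivative (derivative Q)).natDegree = 0 := by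
      have := natDegree_derivative_le Q
      have := natDegree_derivative_le (derivative Q)
      omega
    have h1 := abs_eval_one_derivative_derivative_le hQ hbound
    rw [eq_C_of_natDegree_eq_zero hconst, eval_C] at h1 ⊢
    linarith
  rcases le_or_gt (2 / 3) |x| with hx' | hx'
  · have h := one_add_abs_sq_mul_abs_eval_derivative_derivative_le hQ hbound hx
    have h25 : 25 / 9 ≤ (1 + |x|) ^ 2 := by nlinarith
    nlinarith [mul_le_mul_of_nonneg_right h25 (abs_nonneg ((derivative (derivative Q)).eval x))]
  · exact abs_eval_derivative_derivative_le_of_abs_le hn hQ hbound hx'.le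

theorem abs_eval_derivative_derivative_le_of_Icc {D : ℝ[X]} {u v B : ℝ} (hD : D.natDegree ≤ n)
    (huv : u < v) (hB : 0 < B) (hbound : ∀ t ∈ Icc u v, |D.eval t| ≤ B) {t : ℝ}
    (ht : t ∈ Icc u v) :
    |(derivative (derivative D)).eval t| ≤ 2 * n ^ 4 * B / (v - u) ^ 2 := by
  set L := (v - u) / 2 with hLdef
  set m := (u + v) / 2 with hmdef
  have hL : 0 < L := by linarith
  set Q := C B⁻¹ * D.comp (C L * X + C m)
  have hQ : Q.natDegree ≤ n :=
    (natDegree_C_mul_le _ _).trans ((natDegree_comp_linear_le D L m).trans hD)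
  have hQbound : ∀ y ∈ Icc (-1 : ℝ) 1, |Q.eval y| ≤ 1 := by
    intro y hy
    have hmem : L * y + m ∈ Icc u v := by
      constructor <;> nlinarith [hy.1, hy.2]
    simp only [Q, eval_mul, eval_C, eval_comp, eval_add, eval_X, abs_mul, abs_inv,
      abs_of_pos hB]
    rw [inv_mul_le_iff₀ hB, mul_one]
    exact hbound _ hmem
  have hy : (t - m) / L ∈ Icc (-1 : ℝ) 1 := by
    constructor
    · rw [le_div_iff₀ hL]; linarith [ht.1]
    · rw [div_le_iff₀ hL]; linarith [ht.2]
  have h := abs_eval_derivative_derivative_le hQ hQbound hy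
  rw [show Q = C B⁻¹ * D.comp (C L * X + C m) from rfl, derivative_C_mul, derivative_C_mul,
    eval_mul, eval_C, eval_derivative_derivative_comp_linear,
    show L * ((t - m) / L) + m = t by field_simp; ring, abs_mul, abs_mul, abs_inv,
    abs_of_pos hB, abs_of_pos (by positivity : 0 < L ^ 2)] at h
  rw [le_div_iff₀ (by nlinarith), show (v - u) ^ 2 = 4 * L ^ 2 by rw [hLdef]; ring]
  have := mul_le_mul_of_nonneg_left h (by positivity : 0 ≤ 4 * B)
  rw [← mul_assoc, ← mul_assoc, mul_assoc 4 B, mul_inv_cancel₀ hB.ne'] at this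
  linarith

end Markov

lemma exists_eval_eq_taylor_two (D : ℝ[X]) {a b : ℝ} (hab : a < b) :
    ∃ ξ ∈ Ioo a b, D.eval b = D.eval a + (derivative D).eval a * (b - a)
      + (derivative (derivative D)).eval ξ * (b - a) ^ 2 / 2 := by
  obtain ⟨ξ, hξ, h⟩ := taylor_mean_remainder_lagrange_iteratedDeriv (n := 1)
    (f := fun x => D.eval x) hab.ne (D.contDiff_aeval _).contDiffOn
  rw [uIoo_of_lt hab] at hξ
  refine ⟨ξ, hξ, ?_⟩
  have hderiv : deriv (fun x => D.eval x) = fun x => (derivative D).eval x :=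
    funext fun x => D.deriv
  simp only [taylor_within_apply, Nat.reduceAdd, smul_eq_mul, Finset.sum_range_succ,
    Finset.range_one, Finset.sum_singleton, Nat.factorial_zero, Nat.cast_one, inv_one, pow_zero,
    mul_one, iteratedDerivWithin_zero, one_mul, Nat.factorial_one, pow_one,
    iteratedDerivWithin_one, iteratedDeriv_succ, iteratedDeriv_zero, hderiv, Polynomial.deriv,
    Nat.factorial_two, Nat.cast_ofNat] at h
  rw [D.differentiableAt.derivWithin (uniqueDiffOn_uIcc hab.ne a left_mem_uIcc), D.deriv] at h
  linarith

lemma abs_sub_eq_abs_abs_sub_abs_of_mul_pos {a b : ℝ} (h : 0 < a * b) :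
    |a - b| = |(|a| - |b|)| := by
  rcases mul_pos_iff.mp h with ⟨ha, hb⟩ | ⟨ha, hb⟩
  · rw [abs_of_pos ha, abs_of_pos hb]
  · rw [abs_of_neg ha, abs_of_neg hb, ← abs_neg]
    ring_nf

lemma exists_mul_sq_eq_of_derivative_eq_zero {D : ℝ[X]} {ν μ M : ℝ} (hνμ : ν < μ)
    (hcrit : (derivative D).eval ν = 0) (hval : |D.eval ν| = 2 * M) (hedge : |D.eval μ| = 2)
    (hsign : 0 < D.eval ν * D.eval μ) (hM : 1 < M) :
    ∃ ξ ∈ Ioo ν μ, 4 * (M - 1) = |(derivative (derivative D)).eval ξ| * (μ - ν) ^ 2 := by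
  obtain ⟨ξ, hξ, htaylor⟩ := exists_eval_eq_taylor_two D hνμ
  refine ⟨ξ, hξ, ?_⟩
  have h := abs_sub_eq_abs_abs_sub_abs_of_mul_pos (mul_comm (D.eval ν) _ ▸ hsign)
  rw [hedge, hval, show (2 : ℝ) - 2 * M = -(2 * (M - 1)) by ring, abs_neg,
    abs_of_pos (show 0 < 2 * (M - 1) by linarith), htaylor, hcrit, zero_mul, add_zero,
    add_sub_cancel_left, abs_div, abs_mul, abs_two, abs_of_nonneg (sq_nonneg (μ - ν))] at h
  linarith

lemma sSup_abs_eval_derivative_derivative_le {D : ℝ[X]} {n : ℕ} {u v B : ℝ}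
    (hD : D.natDegree ≤ n) (huv : u < v) (hB : 0 < B) (hbound : ∀ t ∈ Icc u v, |D.eval t| ≤ B) :
    sSup ((fun t => |(derivative (derivative D)).eval t|) '' Icc u v)
      ≤ 2 * n ^ 4 * B / (v - u) ^ 2 :=
  csSup_le ((nonempty_Icc.mpr huv.le).image _) <| by
    rintro _ ⟨t, ht, rfl⟩
    exact abs_eval_derivative_derivative_le_of_Icc hD huv hB hbound ht

theorem stmt11_general (D : Polynomial ℝ) (p : ℕ) (hdeg : D.natDegree = p)
    (u v : ℝ) (huv : u < v)
    (M : ℝ) (hM : 1 < M)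
    (hsup : ∀ t ∈ Icc u v, |D.eval t| ≤ 2 * M)
    (μm μp ν : ℝ) (hsub : Ioo μm μp ⊆ Icc u v) (hν : ν ∈ Ioo μm μp)
    (hμp : μp ∈ Icc u v)
    (hcrit : D.derivative.eval ν = 0)
    (hval : |D.eval ν| = 2 * M) (hedge : |D.eval μp| = 2)
    (hsign : 0 < D.eval ν * D.eval μp)
    (N : ℝ)
    (hN : N = sSup ((fun t => |(D.derivative.derivative).eval t|) '' Icc u v)) :
    (μp - ν) ^ 2 ≥ 4 * (M - 1) / N
    ∧ 4 * (M - 1) / N ≥ (v - u) ^ 2 / (p : ℝ) ^ 4 * ((M - 1) / M)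
    ∧ μp - ν ≥ (v - u) / (p : ℝ) ^ 2 * Real.sqrt ((M - 1) / M) := by
  obtain ⟨ξ, hξ, hjump⟩ := exists_mul_sq_eq_of_derivative_eq_zero hν.2 hcrit hval hedge hsign hM
  have hξN : |(derivative (derivative D)).eval ξ| ≤ N := hN ▸ le_csSup
    (isCompact_Icc.image (derivative (derivative D)).continuous.abs).bddAbove
    ⟨ξ, ⟨(hsub hν).1.trans hξ.1.le, hξ.2.le.trans hμp.2⟩, rfl⟩
  have hNmarkov : N ≤ 2 * p ^ 4 * (2 * M) / (v - u) ^ 2 :=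
    hN ▸ sSup_abs_eval_derivative_derivative_le hdeg.le huv (by linarith) hsup
  have hM1 : 0 < 4 * (M - 1) := by linarith
  have hNpos : 0 < N := (pos_of_mul_pos_left (hjump ▸ hM1) (sq_nonneg _)).trans_le hξN
  have hp : (p : ℝ) ≠ 0 := by
    rintro hp
    rw [hp] at hNmarkov
    norm_num at hNmarkov
    linarith
  have part1 : 4 * (M - 1) / N ≤ (μp - ν) ^ 2 := by
    rw [div_le_iff₀ hNpos, hjump, mul_comm]
    exact mul_le_mul_of_nonneg_left hξN (sq_nonneg _)
  have part2 : (v - u) ^ 2 / (p : ℝ) ^ 4 * ((M - 1) / M) ≤ 4 * (M - 1) / N :=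
    calc (v - u) ^ 2 / (p : ℝ) ^ 4 * ((M - 1) / M)
        = 4 * (M - 1) / (2 * p ^ 4 * (2 * M) / (v - u) ^ 2) := by field_simp; ring
      _ ≤ 4 * (M - 1) / N := div_le_div_of_nonneg_left hM1.le hNpos hNmarkov
  refine ⟨part1, part2, (le_abs_self _).trans (abs_le_of_sq_le_sq ?_ (by linarith [hν.2]))⟩
  rw [mul_pow, sq_sqrt (div_nonneg (by linarith) (by linarith)), div_pow, ← pow_mul]
  exact part2.trans part1

/-- Near a maximal critical point of the discriminant in a gap, Taylor's formula
and Markov's inequality give a lower bound on the distance from the critical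
point to the gap edge: `μ⁺ − ν ≥ (|L|/p²) √((M−1)/M)`. -/
theorem stmt11 (D : Polynomial ℝ) (p : ℕ) (hp : 1 ≤ p) (hdeg : D.natDegree = p)
    (u v : ℝ) (huv : u < v)
    (M : ℝ) (hM : 1 < M)
    (hsup : ∀ t ∈ Icc u v, |D.eval t| ≤ 2 * M)
    (μm μp ν : ℝ) (hsub : Ioo μm μp ⊆ Icc u v) (hν : ν ∈ Ioo μm μp)
    (hμp : μp ∈ Icc u v)
    (hcrit : D.derivative.eval ν = 0)
    (hval : |D.eval ν| = 2 * M) (hedge : |D.eval μp| = 2)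
    (hsign : 0 < D.eval ν * D.eval μp)
    (N : ℝ)
    (hN : N = sSup ((fun t => |(D.derivative.derivative).eval t|) '' Icc u v)) :
    (μp - ν) ^ 2 ≥ 4 * (M - 1) / N
    ∧ 4 * (M - 1) / N ≥ (v - u) ^ 2 / (p : ℝ) ^ 4 * ((M - 1) / M)
    ∧ μp - ν ≥ (v - u) / (p : ℝ) ^ 2 * Real.sqrt ((M - 1) / M) :=
  stmt11_general D p hdeg u v huv M hM hsup μm μp ν hsub hν hμp hcrit hval hedge hsign N hN
end

section
/- Let a₁, a₂, a₃, a₄ > 0, α := a₁²+a₂²+a₃²+a₄², and suppose |a₁ − a₃| ≤ 2g, |a₂ − a₄| ≤ 2g, and |a₁a₃ − a₂a₄|/√α ≤ h/2 for some g, h ≥ 0, with a₁ + a₂ ≥ a₃ + a₄. Then |a₁ − a₂| ≤ h + 8g. -/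
/-!
Since `a₁² − a₂² = (a₁a₃ − a₂a₄) + a₁(a₁ − a₃) + a₂(a₄ − a₂)`, the hypotheses bound
`|a₁ − a₂|(a₁ + a₂) = |a₁² − a₂²|` by `(h/2)√α + 2g(a₁ + a₂)`. The ordering `a₃ + a₄ ≤ a₁ + a₂`
gives `√α ≤ 2(a₁ + a₂)`, while `a₁ + a₂ ≤ 2√α` always holds, so `a₁ + a₂` and `√α` are comparable
up to a factor 2 and the bound becomes `|a₁ − a₂| ≤ h + 8g`.
-/

lemma sqrt_sum_sq_le_two_mul_add {a₁ a₂ a₃ a₄ : ℝ} (h₁ : 0 ≤ a₁) (h₂ : 0 ≤ a₂)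
    (h₃ : 0 ≤ a₃) (h₄ : 0 ≤ a₄) (hord : a₃ + a₄ ≤ a₁ + a₂) :
    √(a₁ ^ 2 + a₂ ^ 2 + a₃ ^ 2 + a₄ ^ 2) ≤ 2 * (a₁ + a₂) := by
  refine Real.sqrt_le_iff.mpr ⟨by positivity, ?_⟩
  nlinarith [mul_nonneg h₁ h₂, mul_nonneg h₃ h₄]

lemma add_le_two_mul_sqrt_sum_sq (a₁ a₂ a₃ a₄ : ℝ) :
    a₁ + a₂ ≤ 2 * √(a₁ ^ 2 + a₂ ^ 2 + a₃ ^ 2 + a₄ ^ 2) := by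
  have hsq := Real.sq_sqrt (show 0 ≤ a₁ ^ 2 + a₂ ^ 2 + a₃ ^ 2 + a₄ ^ 2 by positivity)
  nlinarith [Real.sqrt_nonneg (a₁ ^ 2 + a₂ ^ 2 + a₃ ^ 2 + a₄ ^ 2), sq_nonneg (a₁ - a₂),
    sq_nonneg a₃, sq_nonneg a₄]

lemma abs_sq_sub_sq_le {a₁ a₂ a₃ a₄ : ℝ} (h₁ : 0 ≤ a₁) (h₂ : 0 ≤ a₂) :
    |a₁ ^ 2 - a₂ ^ 2| ≤ |a₁ * a₃ - a₂ * a₄| + a₁ * |a₁ - a₃| + a₂ * |a₂ - a₄| := by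
  have hsplit : a₁ ^ 2 - a₂ ^ 2 = (a₁ * a₃ - a₂ * a₄) + a₁ * (a₁ - a₃) - a₂ * (a₂ - a₄) := by
    ring
  calc |a₁ ^ 2 - a₂ ^ 2|
      ≤ |(a₁ * a₃ - a₂ * a₄) + a₁ * (a₁ - a₃)| + |a₂ * (a₂ - a₄)| := hsplit ▸ abs_sub _ _
    _ ≤ |a₁ * a₃ - a₂ * a₄| + |a₁ * (a₁ - a₃)| + |a₂ * (a₂ - a₄)| := by
        gcongr; exact abs_add_le _ _
    _ = |a₁ * a₃ - a₂ * a₄| + a₁ * |a₁ - a₃| + a₂ * |a₂ - a₄| := by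
        rw [abs_mul, abs_mul, abs_of_nonneg h₁, abs_of_nonneg h₂]

theorem stmt15_general (a₁ a₂ a₃ a₄ g h : ℝ)
    (h₁ : 0 < a₁) (h₂ : 0 < a₂) (h₃ : 0 < a₃) (h₄ : 0 < a₄)
    (hg : 0 ≤ g)
    (h13 : |a₁ - a₃| ≤ 2 * g) (h24 : |a₂ - a₄| ≤ 2 * g)
    (hprod : |a₁ * a₃ - a₂ * a₄| / Real.sqrt (a₁ ^ 2 + a₂ ^ 2 + a₃ ^ 2 + a₄ ^ 2) ≤ h / 2)
    (hord : a₃ + a₄ ≤ a₁ + a₂) :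
    |a₁ - a₂| ≤ h + 8 * g := by
  set s := √(a₁ ^ 2 + a₂ ^ 2 + a₃ ^ 2 + a₄ ^ 2)
  have hs : 0 < s := Real.sqrt_pos.mpr (by positivity)
  have hs_le := sqrt_sum_sq_le_two_mul_add h₁.le h₂.le h₃.le h₄.le hord
  have hadd_le := add_le_two_mul_sqrt_sum_sq a₁ a₂ a₃ a₄
  have hprod' : |a₁ * a₃ - a₂ * a₄| ≤ h / 2 * s := (div_le_iff₀ hs).mp hprod
  have hsq : |a₁ ^ 2 - a₂ ^ 2| ≤ h / 2 * s + 2 * g * (a₁ + a₂) := by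
    have := abs_sq_sub_sq_le (a₃ := a₃) (a₄ := a₄) h₁.le h₂.le
    nlinarith [mul_le_mul_of_nonneg_left h13 h₁.le, mul_le_mul_of_nonneg_left h24 h₂.le]
  refine le_of_mul_le_mul_right ?_ hs
  calc |a₁ - a₂| * s ≤ 2 * (|a₁ - a₂| * (a₁ + a₂)) := by nlinarith [abs_nonneg (a₁ - a₂)]
    _ = 2 * |a₁ ^ 2 - a₂ ^ 2| := by
        rw [sq_sub_sq, abs_mul, abs_of_pos (add_pos h₁ h₂), mul_comm (a₁ + a₂)]
    _ ≤ h * s + 4 * g * (a₁ + a₂) := by linarith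
    _ ≤ (h + 8 * g) * s := by nlinarith

/-- If `|a₁ − a₃| ≤ 2g`, `|a₂ − a₄| ≤ 2g`, `|a₁a₃ − a₂a₄|/√α ≤ h/2` and
`a₁ + a₂ ≥ a₃ + a₄`, then `|a₁ − a₂| ≤ h + 8g`. -/
theorem stmt15 (a₁ a₂ a₃ a₄ g h : ℝ)
    (h₁ : 0 < a₁) (h₂ : 0 < a₂) (h₃ : 0 < a₃) (h₄ : 0 < a₄)
    (hg : 0 ≤ g) (hh : 0 ≤ h)
    (h13 : |a₁ - a₃| ≤ 2 * g) (h24 : |a₂ - a₄| ≤ 2 * g)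
    (hprod : |a₁ * a₃ - a₂ * a₄| / Real.sqrt (a₁ ^ 2 + a₂ ^ 2 + a₃ ^ 2 + a₄ ^ 2) ≤ h / 2)
    (hord : a₃ + a₄ ≤ a₁ + a₂) :
    |a₁ - a₂| ≤ h + 8 * g :=
  stmt15_general a₁ a₂ a₃ a₄ g h h₁ h₂ h₃ h₄ hg h13 h24 hprod hord
end
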